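/- Let β ≥ 0, let x be a point of the Euclidean plane, and let W be a set of points contained in the closed disc of radius β + 1 centred at x such that every point w ∈ W has at most 2 points of W \ {w} within (closed) distance 1 of it. Then W is finite and card W ≤ 12(β + 2)². -/

import Mathlib

/-!
If every point of `W` has at most `k` other points of `W` within distance `δ`, then any point of
the space lies in at most `k + 1` of the open balls of radius `δ / 2` centred at points of `W`
(two centres of balls through a common point are within `δ` of each other). These balls lie in
the ball of radius `r + δ / 2` around `x`, so comparing volumes gives
`|W| (δ/2)^d ≤ (k + 1) (r + δ/2)^d`. In the plane with `δ = 1`, `k = 2`, `r = β + 1` this reads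
`|W| ≤ 12 (β + 3/2)² ≤ 12 (β + 2)²`.
-/

open Metric Set MeasureTheory Finset Module

open Classical in
theorem MeasureTheory.sum_measure_le_mul_measure_of_card_filter_mem_le {α ι : Type*}
    [MeasurableSpace α] (μ : Measure α) {s : Finset ι} {A : ι → Set α} {B : Set α}
    (hA : ∀ i ∈ s, MeasurableSet (A i)) (hB : MeasurableSet B) (hAB : ∀ i ∈ s, A i ⊆ B)
    {m : ℕ} (hm : ∀ y, #{i ∈ s | y ∈ A i} ≤ m) :
    ∑ i ∈ s, μ (A i) ≤ m * μ B := by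
  have hpointwise : ∀ y, ∑ i ∈ s, (A i).indicator 1 y ≤ B.indicator (fun _ ↦ (m : ENNReal)) y := by
    intro y
    by_cases hy : y ∈ B
    · rw [indicator_of_mem hy]
      calc ∑ i ∈ s, (A i).indicator (1 : α → ENNReal) y = #{i ∈ s | y ∈ A i} := by
            simp only [indicator_apply, Pi.one_apply, sum_boole]
        _ ≤ m := by exact_mod_cast hm y
    · rw [indicator_of_notMem hy]
      exact (sum_eq_zero fun i hi ↦ indicator_of_notMem (fun hyA ↦ hy (hAB i hi hyA)) _).le
  calc ∑ i ∈ s, μ (A i) = ∑ i ∈ s, ∫⁻ y, (A i).indicator 1 y ∂μ :=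
        sum_congr rfl fun i hi ↦ (lintegral_indicator_one (hA i hi)).symm
    _ = ∫⁻ y, ∑ i ∈ s, (A i).indicator 1 y ∂μ :=
        (lintegral_finsetSum s fun i hi ↦ measurable_const.indicator (hA i hi)).symm
    _ ≤ ∫⁻ y, B.indicator (fun _ ↦ (m : ENNReal)) y ∂μ := lintegral_mono hpointwise
    _ = m * μ B := lintegral_indicator_const hB _

theorem card_filter_dist_lt_half_le_succ {α : Type*} [PseudoMetricSpace α] {W : Set α}
    {F : Finset α} {δ : ℝ} {k : ℕ} (h : ∀ w ∈ W, ((W \ {w}) ∩ closedBall w δ).encard ≤ k)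
    (hF : ↑F ⊆ W) (y : α) :
    #{w ∈ F | dist y w < δ / 2} ≤ k + 1 := by
  rcases (F.filter fun w ↦ dist y w < δ / 2).eq_empty_or_nonempty with hempty | ⟨w₁, hw₁⟩
  · simp [hempty]
  rw [mem_filter] at hw₁
  have hsub : (↑(F.filter fun w ↦ dist y w < δ / 2) : Set α) ⊆
      insert w₁ ((W \ {w₁}) ∩ closedBall w₁ δ) := by
    intro w hw
    rw [coe_filter, mem_ofPred_eq] at hw
    rcases eq_or_ne w w₁ with rfl | hne
    · exact mem_insert _ _
    refine mem_insert_of_mem _ ⟨⟨hF hw.1, hne⟩, ?_⟩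
    rw [mem_closedBall]
    linarith [dist_triangle_left w w₁ y]
  have hcard := (encard_le_encard hsub).trans <|
    (encard_insert_le _ _).trans (add_le_add_left (h w₁ (hF hw₁.1)) 1)
  rw [encard_coe_eq_coe_finsetCard] at hcard
  exact_mod_cast hcard

theorem card_mul_pow_le_of_encard_inter_closedBall_le {E : Type*} [NormedAddCommGroup E]
    [NormedSpace ℝ E] [FiniteDimensional ℝ E] {W : Set E} {F : Finset E} {x : E} {r δ : ℝ}
    {k : ℕ} (hr : 0 ≤ r) (hδ : 0 < δ) (hW : W ⊆ closedBall x r)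
    (h : ∀ w ∈ W, ((W \ {w}) ∩ closedBall w δ).encard ≤ k) (hF : ↑F ⊆ W) :
    (#F : ℝ) * (δ / 2) ^ finrank ℝ E ≤ (k + 1) * (r + δ / 2) ^ finrank ℝ E := by
  borelize E
  set μ : Measure E := Measure.addHaar
  have hsum : ∑ w ∈ F, μ (ball w (δ / 2)) ≤ (k + 1 : ℕ) * μ (closedBall x (r + δ / 2)) := by
    refine sum_measure_le_mul_measure_of_card_filter_mem_le μ (fun _ _ ↦ measurableSet_ball)
      measurableSet_closedBall (fun w hw ↦ ball_subset_closedBall.trans ?_)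
      (card_filter_dist_lt_half_le_succ h hF)
    refine closedBall_subset_closedBall' ?_
    linarith [mem_closedBall.mp (hW (hF hw))]
  rw [sum_congr rfl fun w _ ↦ μ.addHaar_ball_of_pos w (half_pos hδ),
    μ.addHaar_closedBall x (by positivity), sum_const, nsmul_eq_mul, ← mul_assoc, ← mul_assoc,
    ENNReal.mul_le_mul_iff_left (measure_ball_pos μ 0 one_pos).ne' measure_ball_lt_top.ne,
    ← ENNReal.ofReal_natCast, ← ENNReal.ofReal_natCast, ← ENNReal.ofReal_mul (by positivity),
    ← ENNReal.ofReal_mul (by positivity), ENNReal.ofReal_le_ofReal_iff (by positivity)] at hsum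
  exact_mod_cast hsum

theorem Set.finite_and_ncard_le_of_forall_finset_card_le {α : Type*} {W : Set α} {N : ℝ}
    (h : ∀ F : Finset α, ↑F ⊆ W → (#F : ℝ) ≤ N) : W.Finite ∧ (W.ncard : ℝ) ≤ N := by
  have hfin : W.Finite := by
    by_contra hinf
    obtain ⟨F, hFW, hFcard⟩ := Set.Infinite.exists_subset_card_eq hinf (⌊N⌋₊ + 1)
    have := h F hFW
    rw [hFcard, Nat.cast_add_one] at this
    linarith [Nat.lt_floor_add_one N]
  refine ⟨hfin, ?_⟩
  simpa [ncard_eq_toFinset_card W hfin] using h hfin.toFinset (by simp)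

/-- The bound `|W| ≤ 12(β + 2)²` from Section 6 of the paper: if `W` lies in the closed
disc of radius `β + 1` around `x` and every `w ∈ W` has at most `2` points of `W \ {w}`
within closed distance `1`, then `W` is finite with `|W| ≤ 12(β + 2)²`. -/
theorem stmt_4 (β : ℝ) (hβ : 0 ≤ β) (x : EuclideanSpace ℝ (Fin 2))
    (W : Set (EuclideanSpace ℝ (Fin 2))) (hW : W ⊆ closedBall x (β + 1))
    (h : ∀ w ∈ W, ((W \ {w}) ∩ closedBall w 1).encard ≤ (2 : ℕ∞)) :
    W.Finite ∧ (W.ncard : ℝ) ≤ 12 * (β + 2) ^ 2 := by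
  refine finite_and_ncard_le_of_forall_finset_card_le fun F hF ↦ ?_
  have hpacking := card_mul_pow_le_of_encard_inter_closedBall_le (k := 2) (by linarith) one_pos
    hW h hF
  rw [finrank_euclideanSpace_fin] at hpacking
  nlinarith
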